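/- Let n : ℕ and i : ℕ with i + 2 < n. Let 𝔯_i be the endomorphism of FreeGroup (Fin n) determined on generators by x_i ↦ x_{i+1} * x_i * x_{i+1}⁻¹, x_{i+1} ↦ x_i, and x_k ↦ x_k for k ∉ {i, i+1}; let 𝔰_i be the endomorphism determined by x_i ↦ x_{i+1}, x_{i+1} ↦ x_i, x_k ↦ x_k otherwise; define 𝔯_{i+1} and 𝔰_{i+1} analogously with i replaced by i+1. Then 𝔰_i ∘ 𝔰_{i+1} ∘ 𝔯_i = 𝔯_{i+1} ∘ 𝔰_i ∘ 𝔰_{i+1} as monoid homomorphisms FreeGroup (Fin n) → FreeGroup (Fin n). -/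

import Mathlib

noncomputable section

/-- The endomorphism 𝔯_i of the free group on `n` generators:
`x_i ↦ x_{i+1} x_i x_{i+1}⁻¹`, `x_{i+1} ↦ x_i`, other generators fixed. -/
def rmap (n i : ℕ) (h : i + 1 < n) : FreeGroup (Fin n) →* FreeGroup (Fin n) :=
  FreeGroup.lift (fun j : Fin n =>
    if j.val = i then
      FreeGroup.of (⟨i + 1, h⟩ : Fin n) * FreeGroup.of (⟨i, Nat.lt_of_succ_lt h⟩ : Fin n) *
        (FreeGroup.of (⟨i + 1, h⟩ : Fin n))⁻¹
    else if j.val = i + 1 then FreeGroup.of (⟨i, Nat.lt_of_succ_lt h⟩ : Fin n)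
    else FreeGroup.of j)

/-- The endomorphism 𝔰_i of the free group on `n` generators:
`x_i ↦ x_{i+1}`, `x_{i+1} ↦ x_i`, other generators fixed. -/
def smap (n i : ℕ) (h : i + 1 < n) : FreeGroup (Fin n) →* FreeGroup (Fin n) :=
  FreeGroup.lift (fun j : Fin n =>
    if j.val = i then FreeGroup.of (⟨i + 1, h⟩ : Fin n)
    else if j.val = i + 1 then FreeGroup.of (⟨i, Nat.lt_of_succ_lt h⟩ : Fin n)
    else FreeGroup.of j)

/-! `𝔯_i` only depends on the labelled pair of generators `(x_i, x_{i+1})` and commutes with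
relabelling the generators injectively. The product `𝔰_i ∘ 𝔰_{i+1}` is the relabelling by a
permutation sending `i ↦ i+1` and `i+1 ↦ i+2`, so it carries `𝔯_i` to `𝔯_{i+1}`. -/

namespace FreeGroup

variable {α β : Type*}

theorem map_comp_map {γ : Type*} (f : α → β) (g : β → γ) :
    (map g).comp (map f) = map (g ∘ f) := by
  ext; simp

variable [DecidableEq α] [DecidableEq β]

def braidEndo (a b : α) : FreeGroup α →* FreeGroup α :=
  lift fun j => if j = a then of b * of a * (of b)⁻¹ else if j = b then of a else of j

theorem map_comp_braidEndo {f : α → β} (hf : f.Injective) (a b : α) :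
    (map f).comp (braidEndo a b) = (braidEndo (f a) (f b)).comp (map f) := by
  ext j
  simp only [braidEndo, MonoidHom.comp_apply, lift_apply_of, map.of, hf.eq_iff]
  split_ifs <;> simp

end FreeGroup

open FreeGroup

theorem rmap_eq_braidEndo (n i : ℕ) (h : i + 1 < n) :
    rmap n i h = braidEndo ⟨i, Nat.lt_of_succ_lt h⟩ ⟨i + 1, h⟩ := by
  ext j
  simp [rmap, braidEndo, Fin.ext_iff]

theorem smap_eq_map_swap (n i : ℕ) (h : i + 1 < n) :
    smap n i h = map (Equiv.swap ⟨i, Nat.lt_of_succ_lt h⟩ ⟨i + 1, h⟩) := by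
  ext j
  simp only [smap, lift_apply_of, map.of, Equiv.swap_apply_def, Fin.ext_iff]
  split_ifs <;> rfl

theorem stmt15 (n i : ℕ) (h : i + 2 < n) :
    (smap n i (by omega)).comp ((smap n (i + 1) (by omega)).comp (rmap n i (by omega))) =
      (rmap n (i + 1) (by omega)).comp
        ((smap n i (by omega)).comp (smap n (i + 1) (by omega))) := by
  set σ : Fin n → Fin n := Equiv.swap ⟨i, by omega⟩ ⟨i + 1, by omega⟩ ∘
    Equiv.swap ⟨i + 1, by omega⟩ ⟨i + 2, h⟩ with hσ
  have hσ_inj : σ.Injective := (Equiv.injective _).comp (Equiv.injective _)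
  have hσ_i : σ ⟨i, by omega⟩ = ⟨i + 1, by omega⟩ := by
    simp [hσ, Equiv.swap_apply_def, Fin.ext_iff]
  have hσ_succ : σ ⟨i + 1, by omega⟩ = ⟨i + 2, h⟩ := by
    simp [hσ, Equiv.swap_apply_def, Fin.ext_iff]
  simp only [smap_eq_map_swap, rmap_eq_braidEndo, ← MonoidHom.comp_assoc, map_comp_map]
  rw [map_comp_braidEndo hσ_inj, hσ_i, hσ_succ]
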